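/- Let K ≥ 0, d ≥ 0 and C ∈ ℝ, and let μ and μ_n (n ∈ ℕ) be finite Borel measures on [0, K] with μ([0,K]) = μ_n([0,K]) = d for all n, such that ∫ t^m dμ_n(t) → ∫ t^m dμ(t) as n → ∞ for every m ∈ ℕ. Assume additionally that ∫_{(0,K]} ln(t) dμ_n(t) ≥ C for all n (in particular these integrals are not −∞). Then ∫_{(0,K]} ln(t) dμ(t) ≥ C, and μ_n({0}) → μ({0}) as n → ∞. -/

import Mathlib

/-!
Moment convergence on a compact interval upgrades, by Weierstrass approximation, to convergence of
`∫ f dμₙ` for every continuous `f`. The uniform bound `C ≤ ∫_{(0,K]} log dμₙ` forces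
`μₙ (0, ε] ≤ (K · μₙ (0, K] - C) / (-log ε)` uniformly in `n`, so up to a uniformly small error the
atom `μₙ {0}` is the integral of the continuous bump `max 0 (1 - t / ε)`; hence `μₙ {0} → μ {0}`.
Passing to the limit in `log ε · μₙ {0} + C ≤ ∫ log (max t ε) dμₙ` then bounds the truncated
logarithm against `μ`, and monotone convergence as `ε ↓ 0` gives the bound for `log` itself.
-/

open MeasureTheory Filter Set Real Topology
open scoped Polynomial

lemma tendsto_of_forall_approx {ι : Type*} {l : Filter ι} {a : ι → ℝ} {α : ℝ}
    (h : ∀ δ > 0, ∃ b : ι → ℝ, ∃ β, Tendsto b l (𝓝 β) ∧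
      (∀ᶠ i in l, |a i - b i| ≤ δ) ∧ |β - α| ≤ δ) :
    Tendsto a l (𝓝 α) := by
  rw [Metric.tendsto_nhds]
  intro ε hε
  obtain ⟨b, β, hb, hab, hβ⟩ := h (ε / 3) (by positivity)
  filter_upwards [hab, Metric.tendsto_nhds.1 hb (ε / 3) (by positivity)] with i hai hbi
  rw [Real.dist_eq] at hbi ⊢
  linarith [abs_sub_le (a i) (b i) α, abs_sub_le (b i) β α]

lemma ContinuousOn.integrable_of_measure_compl_eq_zero {X E : Type*} [TopologicalSpace X]
    [T2Space X] [MeasurableSpace X] [OpensMeasurableSpace X] [NormedAddCommGroup E]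
    {μ : Measure X} [IsFiniteMeasure μ] {s : Set X} {f : X → E}
    (hf : ContinuousOn f s) (hs : IsCompact s) (hμ : μ sᶜ = 0) : Integrable f μ := by
  rw [← Measure.restrict_eq_self_of_ae_mem (mem_ae_iff.2 hμ)]
  exact hf.integrableOn_compact hs

lemma integrable_and_le_integral_of_tendsto_of_antitone {α : Type*} [MeasurableSpace α]
    {μ : Measure α} {f : ℕ → α → ℝ} {F : α → ℝ} {C : ℝ}
    (hf : ∀ n, Integrable (f n) μ) (h_anti : ∀ᵐ x ∂μ, Antitone fun n => f n x)
    (h_tendsto : ∀ᵐ x ∂μ, Tendsto (fun n => f n x) atTop (𝓝 (F x)))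
    (hC : ∀ n, C ≤ ∫ x, f n x ∂μ) :
    Integrable F μ ∧ C ≤ ∫ x, F x ∂μ := by
  have hgap_nonneg : ∀ n, 0 ≤ᵐ[μ] fun x => f 0 x - f n x := fun n => by
    filter_upwards [h_anti] with x hx
    exact sub_nonneg.2 (hx (Nat.zero_le n))
  have hgap_lintegral : ∫⁻ x, ENNReal.ofReal (f 0 x - F x) ∂μ
      ≤ ENNReal.ofReal (∫ x, f 0 x ∂μ - C) := by
    refine le_of_tendsto' (lintegral_tendsto_of_tendsto_of_monotone
      (fun n => ((hf 0).sub (hf n)).aemeasurable.ennreal_ofReal) ?_ ?_) fun n => ?_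
    · filter_upwards [h_anti] with x hx i j hij
      exact ENNReal.ofReal_le_ofReal (sub_le_sub_left (hx hij) _)
    · filter_upwards [h_tendsto] with x hx
      exact (ENNReal.continuous_ofReal.tendsto _).comp (tendsto_const_nhds.sub hx)
    · rw [← ofReal_integral_eq_lintegral_ofReal ((hf 0).sub (hf n)) (hgap_nonneg n),
        integral_sub' (hf 0) (hf n)]
      exact ENNReal.ofReal_le_ofReal (by linarith [hC n])
  have hgap : Integrable (fun x => f 0 x - F x) μ := by
    refine ⟨(hf 0).1.sub (aestronglyMeasurable_of_tendsto_ae _ (fun n => (hf n).1) h_tendsto),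
      (hasFiniteIntegral_iff_ofReal ?_).2 (hgap_lintegral.trans_lt ENNReal.ofReal_lt_top)⟩
    filter_upwards [h_anti, h_tendsto] with x hx hxF
    exact sub_nonneg.2 (le_of_tendsto' hxF fun n => hx (Nat.zero_le n))
  have hF : Integrable F μ := ((hf 0).sub hgap).congr (ae_of_all _ fun x => sub_sub_cancel _ _)
  exact ⟨hF, ge_of_tendsto' (integral_tendsto_of_tendsto_of_antitone hf hF h_anti h_tendsto) hC⟩

lemma tendsto_measure_Iic_nhdsGT (ρ : Measure ℝ) [IsFiniteMeasure ρ] (a : ℝ) :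
    Tendsto (fun x => ρ (Iic x)) (𝓝[>] a) (𝓝 (ρ (Iic a))) := by
  have hinter : ⋂ r > a, Iic r = Iic a := by
    ext t
    simp only [mem_iInter, mem_Iic]
    exact ⟨fun h => le_of_forall_gt_imp_ge_of_dense h, fun h r hr => h.trans hr.le⟩
  rw [← hinter]
  exact tendsto_measure_biInter_gt (fun _ _ => measurableSet_Iic.nullMeasurableSet)
    (fun _ _ _ hij => Iic_subset_Iic.2 hij) ⟨a + 1, by linarith, measure_ne_top ρ _⟩

lemma exists_pos_log_le_and_measureReal_Iic_le (ρ : Measure ℝ) [IsFiniteMeasure ρ]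
    (hρ : ρ (Iic 0) = 0) (L : ℝ) {δ : ℝ} (hδ : 0 < δ) :
    ∃ ε > 0, log ε < 0 ∧ log ε ≤ L ∧ ρ.real (Iic ε) ≤ δ := by
  have hsmall : ∀ᶠ ε in 𝓝[>] 0, ρ (Iic ε) < ENNReal.ofReal δ :=
    (tendsto_measure_Iic_nhdsGT ρ 0).eventually_lt_const (by simpa [hρ] using hδ)
  obtain ⟨ε, hε0, hlog0, hlogL, hρε⟩ := (eventually_mem_nhdsWithin.and
    ((tendsto_log_nhdsGT_zero.eventually_lt_atBot 0).and
    ((tendsto_log_nhdsGT_zero.eventually_le_atBot L).and hsmall))).exists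
  exact ⟨ε, hε0, hlog0, hlogL, ENNReal.toReal_le_of_le_ofReal hδ.le hρε.le⟩

lemma eventually_forall_measureReal_le_of_tendsto_moments {μ : Measure ℝ} {μn : ℕ → Measure ℝ}
    [∀ n, IsFiniteMeasure (μn n)]
    (hmom : ∀ m : ℕ, Tendsto (fun n => ∫ t, t ^ m ∂(μn n)) atTop (𝓝 (∫ t, t ^ m ∂μ))) :
    ∀ᶠ n in atTop, ∀ s, (μn n).real s ≤ μ.real univ + 1 := by
  have hmass : Tendsto (fun n => (μn n).real univ) atTop (𝓝 (μ.real univ)) := by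
    simpa using hmom 0
  filter_upwards [hmass.eventually (gt_mem_nhds (lt_add_one _))] with n hn s
  exact (measureReal_mono (subset_univ s)).trans hn.le

section MomentConvergence

variable {μ : Measure ℝ} {μn : ℕ → Measure ℝ} [IsFiniteMeasure μ] [∀ n, IsFiniteMeasure (μn n)]

lemma integral_eval_eq_sum_coeff_mul_moment {ν : Measure ℝ} [IsFiniteMeasure ν] {a b : ℝ}
    (hν : ν (Icc a b)ᶜ = 0) (p : ℝ[X]) :
    ∫ t, p.eval t ∂ν = ∑ i ∈ Finset.range (p.natDegree + 1), p.coeff i * ∫ t, t ^ i ∂ν := by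
  simp_rw [Polynomial.eval_eq_sum_range, ← integral_const_mul]
  exact integral_finsetSum _ fun i _ => ((continuous_pow i).continuousOn.const_smul
    (p.coeff i)).integrable_of_measure_compl_eq_zero isCompact_Icc hν

lemma tendsto_integral_eval_of_tendsto_moments {a b : ℝ}
    (hsupp : μ (Icc a b)ᶜ = 0) (hsuppn : ∀ n, μn n (Icc a b)ᶜ = 0)
    (hmom : ∀ m : ℕ, Tendsto (fun n => ∫ t, t ^ m ∂(μn n)) atTop (𝓝 (∫ t, t ^ m ∂μ)))
    (p : ℝ[X]) :
    Tendsto (fun n => ∫ t, p.eval t ∂(μn n)) atTop (𝓝 (∫ t, p.eval t ∂μ)) := by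
  simp only [integral_eval_eq_sum_coeff_mul_moment (hsuppn _) p,
    integral_eval_eq_sum_coeff_mul_moment hsupp p]
  exact tendsto_finsetSum _ fun i _ => (hmom i).const_mul _

theorem tendsto_integral_of_tendsto_moments {a b : ℝ}
    (hsupp : μ (Icc a b)ᶜ = 0) (hsuppn : ∀ n, μn n (Icc a b)ᶜ = 0)
    (hmom : ∀ m : ℕ, Tendsto (fun n => ∫ t, t ^ m ∂(μn n)) atTop (𝓝 (∫ t, t ^ m ∂μ)))
    {f : ℝ → ℝ} (hf : ContinuousOn f (Icc a b)) :
    Tendsto (fun n => ∫ t, f t ∂(μn n)) atTop (𝓝 (∫ t, f t ∂μ)) := by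
  refine tendsto_of_forall_approx fun δ hδ => ?_
  set B := μ.real univ + 1
  have hB : 0 < B := by positivity
  obtain ⟨p, hp⟩ := exists_polynomial_near_of_continuousOn a b f hf (δ / B) (by positivity)
  have happrox : ∀ (ν : Measure ℝ) [IsFiniteMeasure ν], ν (Icc a b)ᶜ = 0 →
      |∫ t, f t ∂ν - ∫ t, p.eval t ∂ν| ≤ δ / B * ν.real univ := by
    intro ν _ hν
    rw [← integral_sub (hf.integrable_of_measure_compl_eq_zero isCompact_Icc hν)
      (p.continuous.continuousOn.integrable_of_measure_compl_eq_zero isCompact_Icc hν),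
      ← Real.norm_eq_abs]
    refine norm_integral_le_of_norm_le_const ?_
    filter_upwards [mem_ae_iff.2 hν] with t ht
    rw [Real.norm_eq_abs, abs_sub_comm]
    exact (hp t ht).le
  refine ⟨_, _, tendsto_integral_eval_of_tendsto_moments hsupp hsuppn hmom p, ?_, ?_⟩
  · filter_upwards [eventually_forall_measureReal_le_of_tendsto_moments hmom] with n hn
    calc _ ≤ δ / B * (μn n).real univ := happrox _ (hsuppn n)
      _ ≤ δ / B * B := by gcongr; exact hn univ
      _ = δ := div_mul_cancel₀ δ hB.ne'
  · calc _ ≤ δ / B * μ.real univ := by rw [abs_sub_comm]; exact happrox _ hsupp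
      _ ≤ δ / B * B := by gcongr; linarith
      _ = δ := div_mul_cancel₀ δ hB.ne'

end MomentConvergence

section LogMoment

variable {ν : Measure ℝ} {K ε : ℝ}

lemma integral_eq_mul_measureReal_zero_add_setIntegral_Ioc (hsupp : ν (Icc 0 K)ᶜ = 0)
    {f : ℝ → ℝ} (hf : Integrable f ν) :
    ∫ t, f t ∂ν = f 0 * ν.real {0} + ∫ t in Ioc 0 K, f t ∂ν := by
  have hcover : ∀ᵐ t ∂ν, t ∈ ({0} ∪ Ioc 0 K : Set ℝ) := by
    filter_upwards [mem_ae_iff.2 hsupp] with t ⟨ht0, htK⟩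
    rcases ht0.eq_or_lt with rfl | ht0
    exacts [Or.inl rfl, Or.inr ⟨ht0, htK⟩]
  calc ∫ t, f t ∂ν = ∫ t in {0} ∪ Ioc 0 K, f t ∂ν := by
        rw [Measure.restrict_eq_self_of_ae_mem hcover]
    _ = f 0 * ν.real {0} + ∫ t in Ioc 0 K, f t ∂ν := by
        rw [setIntegral_union (by simp) measurableSet_Ioc hf.integrableOn hf.integrableOn,
          integral_singleton, smul_eq_mul, mul_comm]

lemma measureReal_Iic_mul_neg_log_le [IsFiniteMeasure ν]
    (hlog : IntegrableOn log (Ioc 0 K) ν) :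
    (ν.restrict (Ioc 0 K)).real (Iic ε) * -log ε
      ≤ K * ν.real (Ioc 0 K) - ∫ t in Ioc 0 K, log t ∂ν := by
  have hpt : ∀ t ∈ Ioc 0 K, log t ≤ K + log ε * (Iic ε).indicator 1 t := by
    rintro t ⟨ht0, htK⟩
    by_cases htε : t ≤ ε
    · rw [indicator_of_mem (mem_Iic.2 htε), Pi.one_apply, mul_one]
      linarith [log_le_log ht0 htε]
    · rw [indicator_of_notMem (mt mem_Iic.1 htε), mul_zero, add_zero]
      linarith [log_le_sub_one_of_pos ht0]
  have hind : Integrable ((Iic ε).indicator (1 : ℝ → ℝ)) (ν.restrict (Ioc 0 K)) :=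
    (integrable_const 1).indicator measurableSet_Iic
  have hbound : Integrable (fun t => K + log ε * (Iic ε).indicator 1 t) (ν.restrict (Ioc 0 K)) :=
    (integrable_const K).add (hind.const_mul _)
  have hmono := setIntegral_mono_on hlog hbound measurableSet_Ioc hpt
  rw [integral_add (integrable_const K) (hind.const_mul _), integral_const, integral_const_mul,
    integral_indicator_one measurableSet_Iic, smul_eq_mul, measureReal_restrict_apply_univ] at hmono
  linarith

lemma abs_integral_bump_sub_measureReal_zero_le [IsFiniteMeasure ν] (hε : 0 < ε)
    (hsupp : ν (Icc 0 K)ᶜ = 0) :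
    |∫ t, max 0 (1 - t / ε) ∂ν - ν.real {0}| ≤ (ν.restrict (Ioc 0 K)).real (Iic ε) := by
  have hcont : Continuous fun t : ℝ => max 0 (1 - t / ε) := by fun_prop
  have hint := hcont.continuousOn.integrable_of_measure_compl_eq_zero isCompact_Icc hsupp
  rw [integral_eq_mul_measureReal_zero_add_setIntegral_Ioc hsupp hint]
  have hpt : ∀ t ∈ Ioc 0 K, max 0 (1 - t / ε) ≤ (Iic ε).indicator 1 t := by
    rintro t ⟨ht0, -⟩
    by_cases htε : t ≤ ε
    · rw [indicator_of_mem (mem_Iic.2 htε), Pi.one_apply]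
      exact max_le zero_le_one (by linarith [div_nonneg ht0.le hε.le])
    · rw [indicator_of_notMem (mt mem_Iic.1 htε), max_eq_left]
      rw [sub_nonpos, le_div_iff₀ hε]
      linarith
  rw [zero_div, sub_zero, max_eq_right zero_le_one, one_mul, add_sub_cancel_left,
    abs_of_nonneg (setIntegral_nonneg measurableSet_Ioc fun _ _ => le_max_left _ _),
    ← integral_indicator_one measurableSet_Iic]
  exact setIntegral_mono_on hint.integrableOn
    ((integrable_const 1).indicator measurableSet_Iic) measurableSet_Ioc hpt

end LogMoment

lemma continuous_log_max {ε : ℝ} (hε : 0 < ε) : Continuous fun t => log (max t ε) :=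
  (continuous_id.max continuous_const).log fun t => (hε.trans_le (le_max_right t ε)).ne'

lemma integrableOn_log_and_le_setIntegral_log {ν : Measure ℝ} [IsFiniteMeasure ν] {K C : ℝ}
    (h : ∀ ε > 0, C ≤ ∫ t in Ioc 0 K, log (max t ε) ∂ν) :
    IntegrableOn log (Ioc 0 K) ν ∧ C ≤ ∫ t in Ioc 0 K, log t ∂ν := by
  set ε : ℕ → ℝ := fun k => 1 / (k + 1)
  have hε : ∀ k, 0 < ε k := fun k => Nat.one_div_pos_of_nat
  refine integrable_and_le_integral_of_tendsto_of_antitone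
    (fun k => (continuous_log_max (hε k)).integrableOn_Ioc) ?_ ?_ fun k => h _ (hε k)
  · filter_upwards [ae_restrict_mem measurableSet_Ioc] with t ht i j hij
    exact log_le_log (lt_max_of_lt_right (hε j)) (max_le_max_left t
      (Nat.one_div_le_one_div hij))
  · filter_upwards [ae_restrict_mem measurableSet_Ioc] with t ht
    refine tendsto_const_nhds.congr' ?_
    filter_upwards [tendsto_one_div_add_atTop_nhds_zero_nat.eventually_le_const ht.1]
      with k hk
    rw [max_eq_left hk]

section DeterminantBound

variable {K C : ℝ} {μ : Measure ℝ} {μn : ℕ → Measure ℝ} [IsFiniteMeasure μ]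
  [∀ n, IsFiniteMeasure (μn n)]

theorem tendsto_measureReal_zero_of_le_setIntegral_log (hK : 0 ≤ K)
    (hsupp : μ (Icc 0 K)ᶜ = 0) (hsuppn : ∀ n, μn n (Icc 0 K)ᶜ = 0)
    (hmom : ∀ m : ℕ, Tendsto (fun n => ∫ t, t ^ m ∂(μn n)) atTop (𝓝 (∫ t, t ^ m ∂μ)))
    (hlogint : ∀ n, IntegrableOn log (Ioc 0 K) (μn n))
    (hdet : ∀ n, C ≤ ∫ t in Ioc 0 K, log t ∂(μn n)) :
    Tendsto (fun n => (μn n).real {0}) atTop (𝓝 (μ.real {0})) := by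
  set B := μ.real univ + 1
  refine tendsto_of_forall_approx fun δ hδ => ?_
  have hρ0 : μ.restrict (Ioc 0 K) (Iic 0) = 0 := by
    rw [Measure.restrict_apply measurableSet_Iic]
    exact measure_mono_null (fun t ⟨ht0, ht⟩ => absurd ht0 (not_le.2 ht.1)) measure_empty
  obtain ⟨ε, hε0, hlog0, hlogε, hρε⟩ :=
    exists_pos_log_le_and_measureReal_Iic_le _ hρ0 (-((K * B - C) / δ)) hδ
  refine ⟨fun n => ∫ t, max 0 (1 - t / ε) ∂(μn n), ∫ t, max 0 (1 - t / ε) ∂μ,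
    tendsto_integral_of_tendsto_moments hsupp hsuppn hmom (by fun_prop), ?_,
    (abs_integral_bump_sub_measureReal_zero_le hε0 hsupp).trans hρε⟩
  filter_upwards [eventually_forall_measureReal_le_of_tendsto_moments hmom] with n hn
  rw [abs_sub_comm]
  refine (abs_integral_bump_sub_measureReal_zero_le hε0 (hsuppn n)).trans
    (le_of_mul_le_mul_right ?_ (neg_pos.2 hlog0))
  calc _ ≤ K * (μn n).real (Ioc 0 K) - ∫ t in Ioc 0 K, log t ∂(μn n) :=
        measureReal_Iic_mul_neg_log_le (hlogint n)
    _ ≤ K * B - C := by gcongr; exacts [hn _, hdet n]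
    _ ≤ δ * -log ε := (div_le_iff₀' hδ).1 (le_neg.1 hlogε)

lemma le_setIntegral_log_max_of_tendsto_measureReal_zero
    (hsupp : μ (Icc 0 K)ᶜ = 0) (hsuppn : ∀ n, μn n (Icc 0 K)ᶜ = 0)
    (hmom : ∀ m : ℕ, Tendsto (fun n => ∫ t, t ^ m ∂(μn n)) atTop (𝓝 (∫ t, t ^ m ∂μ)))
    (hlogint : ∀ n, IntegrableOn log (Ioc 0 K) (μn n))
    (hdet : ∀ n, C ≤ ∫ t in Ioc 0 K, log t ∂(μn n))
    (hatom : Tendsto (fun n => (μn n).real {0}) atTop (𝓝 (μ.real {0}))) {ε : ℝ} (hε : 0 < ε) :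
    C ≤ ∫ t in Ioc 0 K, log (max t ε) ∂μ := by
  have hcont := continuous_log_max hε
  have hdecomp : ∀ (ν : Measure ℝ) [IsFiniteMeasure ν], ν (Icc 0 K)ᶜ = 0 →
      ∫ t, log (max t ε) ∂ν = log ε * ν.real {0} + ∫ t in Ioc 0 K, log (max t ε) ∂ν :=
    fun ν _ hν => by
      rw [integral_eq_mul_measureReal_zero_add_setIntegral_Ioc hν
        (hcont.continuousOn.integrable_of_measure_compl_eq_zero isCompact_Icc hν),
        max_eq_right hε.le]
  have hbound : ∀ n, log ε * (μn n).real {0} + C ≤ ∫ t, log (max t ε) ∂(μn n) := fun n => by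
    rw [hdecomp _ (hsuppn n)]
    gcongr
    exact (hdet n).trans (setIntegral_mono_on (hlogint n) hcont.integrableOn_Ioc
      measurableSet_Ioc fun t ht => log_le_log ht.1 (le_max_left t ε))
  have hlim := le_of_tendsto_of_tendsto' ((hatom.const_mul (log ε)).add_const C)
    (tendsto_integral_of_tendsto_moments hsupp hsuppn hmom hcont.continuousOn) hbound
  rw [hdecomp μ hsupp] at hlim
  linarith

end DeterminantBound

theorem determinant_bound_convergence_general
    (K C : ℝ) (hK : 0 ≤ K)
    (μ : Measure ℝ) (μn : ℕ → Measure ℝ)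
    [IsFiniteMeasure μ] [∀ n, IsFiniteMeasure (μn n)]
    (hsupp : μ (Set.Icc 0 K)ᶜ = 0) (hsuppn : ∀ n, μn n (Set.Icc 0 K)ᶜ = 0)
    (hmom : ∀ m : ℕ, Tendsto (fun n => ∫ t, t ^ m ∂(μn n)) atTop (nhds (∫ t, t ^ m ∂μ)))
    (hlogint : ∀ n, IntegrableOn Real.log (Set.Ioc 0 K) (μn n))
    (hdet : ∀ n, C ≤ ∫ t in Set.Ioc 0 K, Real.log t ∂(μn n)) :
    (IntegrableOn Real.log (Set.Ioc 0 K) μ ∧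
      C ≤ ∫ t in Set.Ioc 0 K, Real.log t ∂μ) ∧
    Tendsto (fun n => (μn n {0}).toReal) atTop (nhds ((μ {0}).toReal)) := by
  have hatom := tendsto_measureReal_zero_of_le_setIntegral_log hK hsupp hsuppn hmom hlogint hdet
  exact ⟨integrableOn_log_and_le_setIntegral_log fun ε hε =>
      le_setIntegral_log_max_of_tendsto_measureReal_zero hsupp hsuppn hmom hlogint hdet hatom hε,
    hatom⟩

/-- Let `μ, μ_n` be finite Borel measures on `[0, K]`, all of total mass
`d`, whose moments converge: `∫ t^m dμ_n → ∫ t^m dμ` for all `m`.  If the logarithmic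
moments are uniformly bounded below, `∫_{(0,K]} ln t dμ_n ≥ C` for all `n`, then also
`∫_{(0,K]} ln t dμ ≥ C`, and `μ_n({0}) → μ({0})`. -/
theorem determinant_bound_convergence
    (K d C : ℝ) (hK : 0 ≤ K) (hd : 0 ≤ d)
    (μ : Measure ℝ) (μn : ℕ → Measure ℝ)
    [IsFiniteMeasure μ] [∀ n, IsFiniteMeasure (μn n)]
    (hsupp : μ (Set.Icc 0 K)ᶜ = 0) (hsuppn : ∀ n, μn n (Set.Icc 0 K)ᶜ = 0)
    (hmass : μ Set.univ = ENNReal.ofReal d)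
    (hmassn : ∀ n, μn n Set.univ = ENNReal.ofReal d)
    (hmom : ∀ m : ℕ, Tendsto (fun n => ∫ t, t ^ m ∂(μn n)) atTop (nhds (∫ t, t ^ m ∂μ)))
    (hlogint : ∀ n, IntegrableOn Real.log (Set.Ioc 0 K) (μn n))
    (hdet : ∀ n, C ≤ ∫ t in Set.Ioc 0 K, Real.log t ∂(μn n)) :
    (IntegrableOn Real.log (Set.Ioc 0 K) μ ∧
      C ≤ ∫ t in Set.Ioc 0 K, Real.log t ∂μ) ∧
    Tendsto (fun n => (μn n {0}).toReal) atTop (nhds ((μ {0}).toReal)) :=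
  determinant_bound_convergence_general K C hK μ μn hsupp hsuppn hmom hlogint hdet
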